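/- Let u : U → ℝ^{D−d} be smooth on an open set U ⊆ ℝ^d containing 0, with u(0) = 0 and Du(0) = 0, let G(y) := (1/2) log(‖y‖² + ‖u(y)‖²), and for δ negative enough let V_δ := {y ∈ U : ‖y‖² + ‖u(y)‖² < e^{2δ}} and A_δ := (∂/∂δ) Vol(V_δ), the derivative of the Lebesgue volume of V_δ with respect to δ. Then for every ε > 0 there exists K such that for all δ < K, (d − ε) Vol(V_δ) < A_δ < (d + ε) Vol(V_δ); in particular lim_{δ→−∞} A_δ / Vol(V_δ) = d. -/

import Mathlib

open MeasureTheory Real Filter Set Topology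

noncomputable section

/-- The sublevel set `V_δ = {y ∈ U : ‖y‖² + ‖u(y)‖² < e^{2δ}}` of
`G(y) = (1/2) log(‖y‖² + ‖u(y)‖²)`. -/
def sublevel {d m : ℕ} (U : Set (EuclideanSpace ℝ (Fin d)))
    (u : EuclideanSpace ℝ (Fin d) → EuclideanSpace ℝ (Fin m)) (δ : ℝ) :
    Set (EuclideanSpace ℝ (Fin d)) :=
  {y ∈ U | ‖y‖ ^ 2 + ‖u y‖ ^ 2 < Real.exp (2 * δ)}

/-- `Vol(V_δ)`, the `d`-dimensional Lebesgue volume of the sublevel set `V_δ`. -/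
def sublevelVol {d m : ℕ} (U : Set (EuclideanSpace ℝ (Fin d)))
    (u : EuclideanSpace ℝ (Fin d) → EuclideanSpace ℝ (Fin m)) (δ : ℝ) : ℝ :=
  (volume (sublevel U u δ)).toReal

/-!
Along a unit direction `w`, the function `φ_w t = t² + ‖u (t • w)‖²` satisfies
`t² ≤ φ_w t ≤ (1 + η²) t²` and `|φ_w' t - 2t| ≤ 2η² t` as long as `‖Du‖ ≤ η` on the ball of
radius `t`. Hence near the origin `V_δ` is star-shaped, with radius `R_w(δ)` defined by
`φ_w (R_w δ) = e^{2δ}`, and in polar coordinates `Vol(V_δ) = ∫_{S^{d-1}} R_w(δ)^d / d dw`.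
Implicit differentiation gives `∂_δ R_w = 2 e^{2δ} / φ_w'(R_w) = R_w (1 + O(η²))`, so
differentiating under the integral sign yields `A_δ = d (1 + O(η²)) Vol(V_δ)`; since
`Du(0) = 0`, `η` can be taken arbitrarily small once `δ` is negative enough.
-/

open Function Metric
open scoped InnerProductSpace

section Polar

variable {E : Type*} [NormedAddCommGroup E] [NormedSpace ℝ E] [FiniteDimensional ℝ E]
  [MeasurableSpace E] [BorelSpace E] [Nontrivial E] (μ : Measure E) [μ.IsAddHaarMeasure]

theorem measure_eq_lintegral_toSphere_of_radial {S : Set E} {r : sphere (0 : E) 1 → ℝ}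
    (hr : Measurable r) (hr0 : ∀ w, 0 < r w)
    (hS : ∀ w : sphere (0 : E) 1, ∀ t > 0, t • (w : E) ∈ S ↔ t < r w) :
    μ S = ∫⁻ w, ENNReal.ofReal (r w ^ Module.finrank ℝ E / Module.finrank ℝ E) ∂μ.toSphere := by
  set T : Set (sphere (0 : E) 1 × Ioi (0 : ℝ)) := {p | (p.2 : ℝ) < r p.1}
  have hT : MeasurableSet T := measurableSet_lt (measurable_subtype_coe.comp measurable_snd)
    (hr.comp measurable_fst)
  have hpre : homeomorphUnitSphereProd E ⁻¹' T = Subtype.val ⁻¹' S := by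
    ext ⟨x, hx⟩
    have hx : ‖x‖ ≠ 0 := norm_ne_zero_iff.2 hx
    simp only [T, mem_preimage, mem_ofPred_eq, homeomorphUnitSphereProd_apply_snd_coe]
    rw [← hS _ _ (norm_pos_iff.2 (norm_ne_zero_iff.1 hx)),
      homeomorphUnitSphereProd_apply_fst_coe, smul_inv_smul₀ hx]
  have hsection (w : sphere (0 : E) 1) : Prod.mk w ⁻¹' T = Iio ⟨r w, hr0 w⟩ := rfl
  have hdim : Module.finrank ℝ E - 1 + 1 = Module.finrank ℝ E :=
    Nat.sub_add_cancel Module.finrank_pos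
  calc μ S = μ (S \ {0}) := (measure_sdiff_null (measure_singleton 0)).symm
    _ = μ.comap Subtype.val (Subtype.val ⁻¹' S : Set ({0}ᶜ : Set E)) := by
      rw [comap_subtype_coe_apply (measurableSet_singleton 0).compl, Subtype.image_preimage_coe,
        sdiff_eq, inter_comm]
    _ = (μ.toSphere.prod (Measure.volumeIoiPow (Module.finrank ℝ E - 1))) T := by
      rw [← hpre, (Measure.measurePreserving_homeomorphUnitSphereProd μ).measure_preimage
        hT.nullMeasurableSet]
    _ = _ := by
      rw [Measure.prod_apply hT]
      simp only [hsection, Measure.volumeIoiPow_apply_Iio, hdim]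
      norm_cast; rw [hdim]

theorem measureReal_eq_integral_toSphere_of_radial {S : Set E} {r : sphere (0 : E) 1 → ℝ}
    (hr : Measurable r) (hr0 : ∀ w, 0 < r w)
    (hS : ∀ w : sphere (0 : E) 1, ∀ t > 0, t • (w : E) ∈ S ↔ t < r w) :
    μ.real S = ∫ w, r w ^ Module.finrank ℝ E / Module.finrank ℝ E ∂μ.toSphere := by
  rw [measureReal_def, measure_eq_lintegral_toSphere_of_radial μ hr hr0 hS,
    integral_eq_lintegral_of_nonneg_ae (Eventually.of_forall fun w => by have := hr0 w; positivity)
      ((hr.pow_const _).div_const _).aestronglyMeasurable]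

end Polar

section InverseOnInterval

theorem invFunOn_Ioo_mem_and_eq {φ : ℝ → ℝ} {a b c : ℝ} (hab : a ≤ b)
    (hφ : ContinuousOn φ (Icc a b)) (hc : c ∈ Ioo (φ a) (φ b)) :
    invFunOn φ (Ioo a b) c ∈ Ioo a b ∧ φ (invFunOn φ (Ioo a b) c) = c :=
  have hex : ∃ t ∈ Ioo a b, φ t = c := intermediate_value_Ioo hab hφ hc
  ⟨invFunOn_mem hex, invFunOn_eq hex⟩

theorem continuousAt_invFunOn_Ioo {X : Type*} [TopologicalSpace X] {φ : X → ℝ → ℝ}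
    {c : X → ℝ} {a b : ℝ} {x₀ : X} (hab : a ≤ b) (hφ : ∀ x, ContinuousOn (φ x) (Icc a b))
    (hmono : ∀ x, StrictMonoOn (φ x) (Icc a b))
    (hc : ∀ᶠ x in 𝓝 x₀, c x ∈ Ioo (φ x a) (φ x b))
    (hφx : ∀ t ∈ Ioo a b, ContinuousAt (fun x => φ x t) x₀) (hcx : ContinuousAt c x₀) :
    ContinuousAt (fun x => invFunOn (φ x) (Ioo a b) (c x)) x₀ := by
  have hspec := hc.mono fun x hx => invFunOn_Ioo_mem_and_eq hab (hφ x) hx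
  obtain ⟨hmem₀, heq₀⟩ := hspec.self_of_nhds
  refine tendsto_order.2 ⟨fun t ht => ?_, fun t ht => ?_⟩
  · rcases le_or_gt t a with hta | hat
    · filter_upwards [hspec] with x hx using hta.trans_lt hx.1.1
    · have htI : t ∈ Icc a b := ⟨hat.le, (ht.trans hmem₀.2).le⟩
      have hlt : φ x₀ t < c x₀ := heq₀ ▸ hmono x₀ htI (Ioo_subset_Icc_self hmem₀) ht
      filter_upwards [hspec, (hφx t ⟨hat, ht.trans hmem₀.2⟩).eventually_lt hcx hlt]
        with x hx hφt
      exact (hmono x).lt_iff_lt htI (Ioo_subset_Icc_self hx.1) |>.1 (by rwa [hx.2])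
  · rcases le_or_gt b t with hbt | htb
    · filter_upwards [hspec] with x hx using hx.1.2.trans_le hbt
    · have htI : t ∈ Icc a b := ⟨(hmem₀.1.trans ht).le, htb.le⟩
      have hlt : c x₀ < φ x₀ t := heq₀ ▸ hmono x₀ (Ioo_subset_Icc_self hmem₀) htI ht
      filter_upwards [hspec, hcx.eventually_lt (hφx t ⟨hmem₀.1.trans ht, htb⟩) hlt]
        with x hx hφt
      exact (hmono x).lt_iff_lt (Ioo_subset_Icc_self hx.1) htI |>.1 (by rwa [hx.2])

end InverseOnInterval

theorem aestronglyMeasurable_of_hasDerivAt {α 𝕜 F : Type*} [MeasurableSpace α] {μ : Measure α}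
    [NontriviallyNormedField 𝕜] [NormedAddCommGroup F] [NormedSpace 𝕜 F]
    {f : 𝕜 → α → F} {f' : α → F} {x₀ : 𝕜}
    (hf : ∀ᶠ x in 𝓝 x₀, AEStronglyMeasurable (f x) μ)
    (hf' : ∀ᵐ a ∂μ, HasDerivAt (f · a) (f' a) x₀) : AEStronglyMeasurable f' μ := by
  obtain ⟨x, hx⟩ := exists_seq_tendsto (𝓝[≠] x₀)
  obtain ⟨N, hN⟩ := eventually_atTop.1 ((tendsto_nhds_of_tendsto_nhdsWithin hx).eventually hf)
  refine aestronglyMeasurable_of_tendsto_ae atTop (f := fun n a => slope (f · a) x₀ (x (n + N)))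
    (fun n => ?_) ?_
  · simp only [slope_def_module]
    exact ((hN _ (Nat.le_add_left N n)).sub (hf.self_of_nhds)).const_smul _
  · filter_upwards [hf'] with a ha
    exact (hasDerivAt_iff_tendsto_slope.1 ha).comp ((tendsto_add_atTop_iff_nat N).2 hx)

theorem abs_two_mul_div_sub_le {r a b θ : ℝ} (hr : 0 < r) (hθ : 3 * θ ≤ 1) (ha : r ^ 2 ≤ a)
    (ha' : a ≤ (1 + θ) * r ^ 2) (hb : |b - 2 * r| ≤ 2 * θ * r) : |2 * a / b - r| ≤ 3 * θ * r := by
  obtain ⟨hb₁, hb₂⟩ := abs_le.1 hb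
  have hθ0 : 0 ≤ θ := by nlinarith
  have hb0 : 0 < b := by nlinarith
  rw [abs_le, le_sub_iff_add_le, sub_le_iff_le_add, le_div_iff₀ hb0, div_le_iff₀ hb0]
  constructor <;> nlinarith [mul_nonneg hθ0 hr.le, mul_nonneg (mul_nonneg hθ0 hθ0) hr.le]

theorem tendsto_div_of_forall_eventually_abs_sub_mul_lt {α : Type*} {l : Filter α} {f g : α → ℝ}
    {a : ℝ} (h : ∀ ε > 0, ∀ᶠ x in l, 0 < g x ∧ |f x - a * g x| < ε * g x) :
    Tendsto (fun x => f x / g x) l (𝓝 a) := by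
  refine Metric.tendsto_nhds.2 fun ε hε => (h ε hε).mono fun x ⟨hg, hx⟩ => ?_
  rwa [dist_eq, ← mul_div_cancel_right₀ a hg.ne', ← sub_div, abs_div, abs_of_pos hg,
    div_lt_iff₀ hg]

section Ray

variable {E F : Type*} [NormedAddCommGroup E] [NormedSpace ℝ E] [NormedAddCommGroup F]
  {u : E → F} {v : E} {ρ η t : ℝ}

/-- `‖y‖² + ‖u y‖²` at `y = t • v`, when `‖v‖ = 1` and `0 ≤ t`. -/
def ray (u : E → F) (v : E) (t : ℝ) : ℝ := t ^ 2 + ‖u (t • v)‖ ^ 2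

theorem sq_le_ray : t ^ 2 ≤ ray u v t := le_add_of_nonneg_right (by positivity)

variable [NormedSpace ℝ F]

structure IsFlatOn (u : E → F) (ρ η : ℝ) : Prop where
  map_zero : u 0 = 0
  differentiableAt : ∀ y ∈ closedBall (0 : E) ρ, DifferentiableAt ℝ u y
  norm_fderiv_le : ∀ y ∈ closedBall (0 : E) ρ, ‖fderiv ℝ u y‖ ≤ η

theorem smul_mem_closedBall_of_norm_eq_one (hv : ‖v‖ = 1) (ht : t ∈ Icc 0 ρ) :
    t • v ∈ closedBall (0 : E) ρ := by
  simpa [norm_smul, hv, abs_of_nonneg ht.1] using ht.2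

namespace IsFlatOn

theorem nonneg (hu : IsFlatOn u ρ η) (hρ : 0 ≤ ρ) : 0 ≤ η :=
  (norm_nonneg _).trans (hu.norm_fderiv_le 0 (mem_closedBall_self hρ))

theorem norm_le (hu : IsFlatOn u ρ η) {y : E} (hy : y ∈ closedBall (0 : E) ρ) :
    ‖u y‖ ≤ η * ‖y‖ := by
  simpa [hu.map_zero] using (convex_closedBall (0 : E) ρ).norm_image_sub_le_of_norm_fderiv_le
    hu.differentiableAt hu.norm_fderiv_le (mem_closedBall_self (nonneg_of_mem_closedBall hy)) hy

theorem norm_le_of_mem_Icc (hu : IsFlatOn u ρ η) (hv : ‖v‖ = 1) (ht : t ∈ Icc 0 ρ) :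
    ‖u (t • v)‖ ≤ η * t := by
  simpa [norm_smul, hv, abs_of_nonneg ht.1] using
    hu.norm_le (smul_mem_closedBall_of_norm_eq_one hv ht)

theorem ray_le (hu : IsFlatOn u ρ η) (hv : ‖v‖ = 1) (ht : t ∈ Icc 0 ρ) :
    ray u v t ≤ (1 + η ^ 2) * t ^ 2 := by
  have := pow_le_pow_left₀ (norm_nonneg _) (hu.norm_le_of_mem_Icc hv ht) 2
  rw [ray]; nlinarith

end IsFlatOn

end Ray

section RayDeriv

variable {E F : Type*} [NormedAddCommGroup E] [NormedSpace ℝ E] [NormedAddCommGroup F]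
  [InnerProductSpace ℝ F] {u : E → F} {v : E} {ρ η t : ℝ}

def rayDeriv (u : E → F) (v : E) (t : ℝ) : ℝ := 2 * t + 2 * ⟪u (t • v), fderiv ℝ u (t • v) v⟫_ℝ

theorem hasDerivAt_ray (hu : DifferentiableAt ℝ u (t • v)) :
    HasDerivAt (ray u v) (rayDeriv u v t) t := by
  have hline : HasDerivAt (fun s : ℝ => u (s • v)) (fderiv ℝ u (t • v) v) t :=
    hu.hasFDerivAt.comp_hasDerivAt t (by simpa using (hasDerivAt_id t).smul_const v)
  exact ((hasDerivAt_pow 2 t).add hline.norm_sq).congr_deriv (by norm_num [rayDeriv])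

namespace IsFlatOn

theorem abs_rayDeriv_sub_le (hu : IsFlatOn u ρ η) (hv : ‖v‖ = 1) (ht : t ∈ Icc 0 ρ) :
    |rayDeriv u v t - 2 * t| ≤ 2 * η ^ 2 * t := by
  have hDu : ‖fderiv ℝ u (t • v) v‖ ≤ η := by
    simpa [hv] using (fderiv ℝ u (t • v)).le_of_opNorm_le
      (hu.norm_fderiv_le _ (smul_mem_closedBall_of_norm_eq_one hv ht)) v
  have hu_le := hu.norm_le_of_mem_Icc hv ht
  have : |⟪u (t • v), fderiv ℝ u (t • v) v⟫_ℝ| ≤ η * t * η :=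
    (abs_real_inner_le_norm _ _).trans
      (mul_le_mul hu_le hDu (norm_nonneg _) ((norm_nonneg _).trans hu_le))
  rw [rayDeriv, add_sub_cancel_left, abs_mul, abs_two]
  nlinarith

theorem hasDerivAt_ray (hu : IsFlatOn u ρ η) (hv : ‖v‖ = 1) (ht : t ∈ Icc 0 ρ) :
    HasDerivAt (ray u v) (rayDeriv u v t) t :=
  _root_.hasDerivAt_ray (hu.differentiableAt _ (smul_mem_closedBall_of_norm_eq_one hv ht))

end IsFlatOn

end RayDeriv

section Radius

variable {E F : Type*} [NormedAddCommGroup E] [NormedSpace ℝ E] [NormedAddCommGroup F]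
  [InnerProductSpace ℝ F] {u : E → F} {v : E} {ρ η δ : ℝ}

theorem exp_two_mul_lt_sq (hρ : 0 < ρ) (hδ : δ < log ρ) : exp (2 * δ) < ρ ^ 2 := by
  rw [two_mul, exp_add, ← sq]
  exact pow_lt_pow_left₀ ((lt_log_iff_exp_lt hρ).1 hδ) (exp_pos δ).le two_ne_zero

/-- The radius at which the ray through `v` leaves `{y | ‖y‖² + ‖u y‖² < exp (2 * δ)}`. -/
def sublevelRadius (u : E → F) (ρ : ℝ) (v : E) (δ : ℝ) : ℝ :=
  invFunOn (ray u v) (Ioo 0 ρ) (exp (2 * δ))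

def sublevelRadiusDeriv (u : E → F) (ρ : ℝ) (v : E) (δ : ℝ) : ℝ :=
  2 * exp (2 * δ) / rayDeriv u v (sublevelRadius u ρ v δ)

namespace IsFlatOn

theorem rayDeriv_pos (hu : IsFlatOn u ρ η) (hη : η < 1) (hv : ‖v‖ = 1) {t : ℝ}
    (ht : t ∈ Ioc 0 ρ) : 0 < rayDeriv u v t := by
  have hη0 := hu.nonneg (ht.1.trans_le ht.2).le
  have := abs_le.1 (hu.abs_rayDeriv_sub_le hv (Ioc_subset_Icc_self ht))
  nlinarith [ht.1, mul_lt_mul'' hη hη hη0 hη0]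

theorem strictMonoOn_ray (hu : IsFlatOn u ρ η) (hη : η < 1) (hv : ‖v‖ = 1) :
    StrictMonoOn (ray u v) (Icc 0 ρ) := by
  refine strictMonoOn_of_deriv_pos (convex_Icc 0 ρ)
    (fun t ht => (hu.hasDerivAt_ray hv ht).continuousAt.continuousWithinAt) fun t ht => ?_
  rw [interior_Icc] at ht
  rw [(hu.hasDerivAt_ray hv (Ioo_subset_Icc_self ht)).deriv]
  exact hu.rayDeriv_pos hη hv (Ioo_subset_Ioc_self ht)

theorem exp_two_mul_mem_Ioo_ray (hu : IsFlatOn u ρ η) (hρ : 0 < ρ) (hδ : δ < log ρ) :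
    exp (2 * δ) ∈ Ioo (ray u v 0) (ray u v ρ) :=
  ⟨by simpa [ray, hu.map_zero] using exp_pos (2 * δ),
    (exp_two_mul_lt_sq hρ hδ).trans_le sq_le_ray⟩

theorem sublevelRadius_mem_and_ray_eq (hu : IsFlatOn u ρ η) (hρ : 0 < ρ) (hv : ‖v‖ = 1)
    (hδ : δ < log ρ) :
    sublevelRadius u ρ v δ ∈ Ioo 0 ρ ∧ ray u v (sublevelRadius u ρ v δ) = exp (2 * δ) :=
  invFunOn_Ioo_mem_and_eq hρ.le
    (fun _ ht => (hu.hasDerivAt_ray hv ht).continuousAt.continuousWithinAt)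
    (hu.exp_two_mul_mem_Ioo_ray hρ hδ)

theorem lt_sublevelRadius_iff (hu : IsFlatOn u ρ η) (hη : η < 1) (hρ : 0 < ρ) (hv : ‖v‖ = 1)
    (hδ : δ < log ρ) {t : ℝ} (ht : t ∈ Icc 0 ρ) :
    t < sublevelRadius u ρ v δ ↔ ray u v t < exp (2 * δ) := by
  obtain ⟨hmem, heq⟩ := hu.sublevelRadius_mem_and_ray_eq hρ hv hδ
  rw [← heq, (hu.strictMonoOn_ray hη hv).lt_iff_lt ht (Ioo_subset_Icc_self hmem)]

theorem continuousAt_sublevelRadius (hu : IsFlatOn u ρ η) (hη : η < 1) (hρ : 0 < ρ)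
    (w : sphere (0 : E) 1) (hδ : δ < log ρ) :
    ContinuousAt (fun p : sphere (0 : E) 1 × ℝ => sublevelRadius u ρ p.1 p.2) (w, δ) := by
  have hnorm (w : sphere (0 : E) 1) : ‖(w : E)‖ = 1 := norm_eq_of_mem_sphere w
  refine continuousAt_invFunOn_Ioo hρ.le
    (fun p t ht => (hu.hasDerivAt_ray (hnorm p.1) ht).continuousAt.continuousWithinAt)
    (fun p => hu.strictMonoOn_ray hη (hnorm p.1))
    ((continuous_snd.continuousAt.eventually_lt continuousAt_const hδ).mono
      fun p hp => hu.exp_two_mul_mem_Ioo_ray hρ hp) (fun t ht => ?_) (by fun_prop)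
  have hcont : ContinuousAt u (t • (w : E)) := (hu.differentiableAt _
    (smul_mem_closedBall_of_norm_eq_one (hnorm w) (Ioo_subset_Icc_self ht))).continuousAt
  exact continuousAt_const.add
    ((hcont.comp (f := fun p : sphere (0 : E) 1 × ℝ => t • (p.1 : E)) (by fun_prop)).norm.pow 2)

theorem continuous_sublevelRadius (hu : IsFlatOn u ρ η) (hη : η < 1) (hρ : 0 < ρ)
    (hδ : δ < log ρ) : Continuous fun w : sphere (0 : E) 1 => sublevelRadius u ρ w δ :=
  continuous_iff_continuousAt.2 fun w =>
    (hu.continuousAt_sublevelRadius hη hρ w hδ).comp (f := fun w => (w, δ)) (by fun_prop)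

theorem hasDerivAt_sublevelRadius (hu : IsFlatOn u ρ η) (hη : η < 1) (hρ : 0 < ρ)
    (w : sphere (0 : E) 1) (hδ : δ < log ρ) :
    HasDerivAt (sublevelRadius u ρ w) (sublevelRadiusDeriv u ρ w δ) δ := by
  have hw : ‖(w : E)‖ = 1 := norm_eq_of_mem_sphere w
  obtain ⟨hmem, -⟩ := hu.sublevelRadius_mem_and_ray_eq hρ hw hδ
  have hexp : HasDerivAt (fun s => exp (2 * s)) (2 * exp (2 * δ)) δ := by
    simpa [mul_comm] using ((hasDerivAt_id δ).const_mul 2).exp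
  refine HasDerivAt.of_comp_left
    ((hu.continuousAt_sublevelRadius hη hρ w hδ).comp (f := fun s => (w, s)) (by fun_prop))
    (hu.hasDerivAt_ray hw (Ioo_subset_Icc_self hmem)) hexp
    (hu.rayDeriv_pos hη hw (Ioo_subset_Ioc_self hmem)).ne' ?_
  filter_upwards [Iio_mem_nhds hδ] with s hs
  exact (hu.sublevelRadius_mem_and_ray_eq hρ hw hs).2

theorem abs_sublevelRadiusDeriv_sub_le (hu : IsFlatOn u ρ η) (hη : η ≤ 1 / 2) (hρ : 0 < ρ)
    (hv : ‖v‖ = 1) (hδ : δ < log ρ) :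
    |sublevelRadiusDeriv u ρ v δ - sublevelRadius u ρ v δ| ≤
      3 * η ^ 2 * sublevelRadius u ρ v δ := by
  obtain ⟨hmem, heq⟩ := hu.sublevelRadius_mem_and_ray_eq hρ hv hδ
  have hη0 := hu.nonneg hρ.le
  rw [sublevelRadiusDeriv, ← heq]
  exact abs_two_mul_div_sub_le hmem.1 (by nlinarith) sq_le_ray
    (hu.ray_le hv (Ioo_subset_Icc_self hmem)) (hu.abs_rayDeriv_sub_le hv (Ioo_subset_Icc_self hmem))

end IsFlatOn

end Radius

theorem exists_closedBall_subset_isFlatOn {E F : Type*} [NormedAddCommGroup E] [NormedSpace ℝ E]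
    [NormedAddCommGroup F] [NormedSpace ℝ F] {U : Set E} {u : E → F} (hU : IsOpen U)
    (h0U : (0 : E) ∈ U) (hu : ContDiffOn ℝ 1 u U) (hu0 : u 0 = 0) (hDu0 : fderiv ℝ u 0 = 0)
    {η : ℝ} (hη : 0 < η) : ∃ ρ > 0, closedBall (0 : E) ρ ⊆ U ∧ IsFlatOn u ρ η := by
  have hcont : ContinuousAt (fun y => ‖fderiv ℝ u y‖) 0 :=
    ((hu.continuousOn_fderiv_of_isOpen hU le_rfl).continuousAt (hU.mem_nhds h0U)).norm
  have hsmall : ∀ᶠ y in 𝓝 (0 : E), ‖fderiv ℝ u y‖ < η :=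
    hcont.eventually_lt continuousAt_const (by simpa [hDu0] using hη)
  obtain ⟨ρ, hρ, hball⟩ := nhds_basis_closedBall.mem_iff.1 (inter_mem (hU.mem_nhds h0U) hsmall)
  refine ⟨ρ, hρ, fun y hy => (hball hy).1, hu0, fun y hy => ?_, fun y hy => (hball hy).2.le⟩
  exact (hu.contDiffAt (hU.mem_nhds (hball hy).1)).differentiableAt one_ne_zero

theorem sublevelVol_eq_one_of_fin_zero {m : ℕ} {U : Set (EuclideanSpace ℝ (Fin 0))}
    {u : EuclideanSpace ℝ (Fin 0) → EuclideanSpace ℝ (Fin m)} (h0U : 0 ∈ U) (hu0 : u 0 = 0)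
    (δ : ℝ) : sublevelVol U u δ = 1 := by
  have : sublevel U u δ = univ :=
    eq_univ_of_forall fun y => by
      simpa [Subsingleton.elim y 0, sublevel, hu0] using ⟨h0U, exp_pos _⟩
  simp [sublevelVol, this, volume_euclideanSpace_eq_dirac]

section Sublevel

variable {d m : ℕ} {U : Set (EuclideanSpace ℝ (Fin d))}
  {u : EuclideanSpace ℝ (Fin d) → EuclideanSpace ℝ (Fin m)} {ρ η δ : ℝ}

local notation "𝕊" => sphere (0 : EuclideanSpace ℝ (Fin d)) 1

namespace IsFlatOn

theorem smul_mem_sublevel_iff (hball : closedBall 0 ρ ⊆ U) (hu : IsFlatOn u ρ η) (hη : η < 1)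
    (hρ : 0 < ρ) (hδ : δ < log ρ) (w : 𝕊) {t : ℝ} (ht : 0 < t) :
    t • (w : EuclideanSpace ℝ (Fin d)) ∈ sublevel U u δ ↔ t < sublevelRadius u ρ w δ := by
  have hw : ‖(w : EuclideanSpace ℝ (Fin d))‖ = 1 := norm_eq_of_mem_sphere w
  have hnorm : ‖t • (w : EuclideanSpace ℝ (Fin d))‖ = t := by simp [norm_smul, hw, ht.le]
  rcases le_or_gt t ρ with htρ | hρt
  · have hmem := smul_mem_closedBall_of_norm_eq_one hw ⟨ht.le, htρ⟩
    rw [hu.lt_sublevelRadius_iff hη hρ hw hδ ⟨ht.le, htρ⟩]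
    simp [sublevel, hnorm, hball hmem, ray]
  · have hR := (hu.sublevelRadius_mem_and_ray_eq hρ hw hδ).1.2
    refine iff_of_false (fun h => ?_) (by linarith)
    have hlt := h.2
    rw [hnorm] at hlt
    nlinarith [exp_two_mul_lt_sq hρ hδ]

theorem sublevelVol_eq_integral [NeZero d] (hball : closedBall 0 ρ ⊆ U) (hu : IsFlatOn u ρ η)
    (hη : η < 1) (hρ : 0 < ρ) (hδ : δ < log ρ) :
    sublevelVol U u δ = ∫ w : 𝕊, sublevelRadius u ρ w δ ^ d / d ∂volume.toSphere := by
  have hw (w : 𝕊) := norm_eq_of_mem_sphere w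
  rw [sublevelVol, ← measureReal_def]
  simpa [finrank_euclideanSpace_fin] using measureReal_eq_integral_toSphere_of_radial volume
    (hu.continuous_sublevelRadius hη hρ hδ).measurable
    (fun w => (hu.sublevelRadius_mem_and_ray_eq hρ (hw w) hδ).1.1)
    (fun w _ ht => hu.smul_mem_sublevel_iff hball hη hρ hδ w ht)

theorem sublevelVol_pos [NeZero d] (hball : closedBall 0 ρ ⊆ U) (hu : IsFlatOn u ρ η)
    (hη : η < 1) (hρ : 0 < ρ) (hδ : δ < log ρ) : 0 < sublevelVol U u δ := by
  have hR (w : 𝕊) := (hu.sublevelRadius_mem_and_ray_eq hρ (norm_eq_of_mem_sphere w) hδ).1.1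
  have hpos (w : 𝕊) : 0 < sublevelRadius u ρ w δ ^ d / d :=
    div_pos (pow_pos (hR w) d) (Nat.cast_pos.2 (NeZero.pos d))
  rw [hu.sublevelVol_eq_integral hball hη hρ hδ]
  refine (integral_pos_iff_support_of_nonneg (fun w => (hpos w).le)
    ((((hu.continuous_sublevelRadius hη hρ hδ).pow d).div_const _).integrable_of_hasCompactSupport
      (.of_compactSpace _))).2 ?_
  exact (Measure.measure_univ_pos.2 (Measure.toSphere_ne_zero _)).trans_le
    (measure_mono fun w _ => (hpos w).ne')

theorem hasDerivAt_sublevelVol [NeZero d] (hball : closedBall 0 ρ ⊆ U) (hu : IsFlatOn u ρ η)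
    (hη : η ≤ 1 / 2) (hρ : 0 < ρ) (hδ : δ < log ρ) :
    Integrable (fun w : 𝕊 => sublevelRadius u ρ w δ ^ (d - 1) * sublevelRadiusDeriv u ρ w δ)
        volume.toSphere ∧
      HasDerivAt (sublevelVol U u) (∫ w : 𝕊,
        sublevelRadius u ρ w δ ^ (d - 1) * sublevelRadiusDeriv u ρ w δ ∂volume.toSphere) δ := by
  have hη1 : η < 1 := by linarith
  have hw (w : 𝕊) := norm_eq_of_mem_sphere w
  have hderiv (s : ℝ) (hs : s < log ρ) (w : 𝕊) :
      HasDerivAt (fun s => sublevelRadius u ρ w s ^ d / d)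
        (sublevelRadius u ρ w s ^ (d - 1) * sublevelRadiusDeriv u ρ w s) s := by
    refine (((hu.hasDerivAt_sublevelRadius hη1 hρ w hs).pow d).div_const (d : ℝ)).congr_deriv ?_
    field_simp [NeZero.ne d]
  have hbound (s : ℝ) (hs : s < log ρ) (w : 𝕊) :
      ‖sublevelRadius u ρ w s ^ (d - 1) * sublevelRadiusDeriv u ρ w s‖ ≤ ρ ^ (d - 1) * (2 * ρ) := by
    obtain ⟨hR0, hRρ⟩ := (hu.sublevelRadius_mem_and_ray_eq hρ (hw w) hs).1
    have := abs_le.1 (hu.abs_sublevelRadiusDeriv_sub_le hη hρ (hw w) hs)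
    have hη2 : η ^ 2 ≤ 1 / 4 := by nlinarith [hu.nonneg hρ.le]
    have hη2R := mul_le_mul_of_nonneg_right hη2 hR0.le
    rw [norm_mul, norm_pow, norm_of_nonneg hR0.le, Real.norm_eq_abs]
    exact mul_le_mul (pow_le_pow_left₀ hR0.le hRρ.le _) (abs_le.2 ⟨by linarith, by linarith⟩)
      (abs_nonneg _) (by positivity)
  have hmeas : ∀ᶠ s in 𝓝 δ,
      AEStronglyMeasurable (fun w : 𝕊 => sublevelRadius u ρ w s ^ d / d) volume.toSphere :=
    eventually_of_mem (Iio_mem_nhds hδ) fun s hs =>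
      ((hu.continuous_sublevelRadius hη1 hρ hs).pow d).div_const _ |>.aestronglyMeasurable
  obtain ⟨hint, h⟩ := hasDerivAt_integral_of_dominated_loc_of_deriv_le (Iio_mem_nhds hδ) hmeas
    ((((hu.continuous_sublevelRadius hη1 hρ hδ).pow d).div_const _).integrable_of_hasCompactSupport
      (.of_compactSpace _))
    (aestronglyMeasurable_of_hasDerivAt hmeas (ae_of_all _ (hderiv δ hδ)))
    (ae_of_all _ fun w s hs => hbound s hs w) (integrable_const _)
    (ae_of_all _ fun w s hs => hderiv s hs w)
  exact ⟨hint, h.congr_of_eventuallyEq (eventually_of_mem (Iio_mem_nhds hδ) fun s hs =>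
    hu.sublevelVol_eq_integral hball hη1 hρ hs)⟩

theorem abs_deriv_sublevelVol_sub_le [NeZero d] (hball : closedBall 0 ρ ⊆ U)
    (hu : IsFlatOn u ρ η) (hη : η ≤ 1 / 2) (hρ : 0 < ρ) (hδ : δ < log ρ) :
    |deriv (sublevelVol U u) δ - d * sublevelVol U u δ| ≤ 3 * d * η ^ 2 * sublevelVol U u δ := by
  have hη1 : η < 1 := by linarith
  obtain ⟨hint', hderiv⟩ := hu.hasDerivAt_sublevelVol hball hη hρ hδ
  have hint : Integrable (fun w : 𝕊 => sublevelRadius u ρ w δ ^ d) volume.toSphere :=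
    ((hu.continuous_sublevelRadius hη1 hρ hδ).pow d).integrable_of_hasCompactSupport
      (.of_compactSpace _)
  have hvol : d * sublevelVol U u δ = ∫ w : 𝕊, sublevelRadius u ρ w δ ^ d ∂volume.toSphere := by
    rw [hu.sublevelVol_eq_integral hball hη1 hρ hδ, ← integral_const_mul]
    congr with w
    field_simp [NeZero.ne d]
  have hpointwise (w : 𝕊) :
      ‖sublevelRadius u ρ w δ ^ (d - 1) * sublevelRadiusDeriv u ρ w δ - sublevelRadius u ρ w δ ^ d‖
        ≤ 3 * η ^ 2 * sublevelRadius u ρ w δ ^ d := by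
    have hR0 := (hu.sublevelRadius_mem_and_ray_eq hρ (norm_eq_of_mem_sphere w) hδ).1.1
    rw [← pow_sub_one_mul (NeZero.ne d), ← mul_sub, norm_mul, norm_pow, norm_of_nonneg hR0.le,
      Real.norm_eq_abs]
    calc _ ≤ sublevelRadius u ρ w δ ^ (d - 1) * (3 * η ^ 2 * sublevelRadius u ρ w δ) :=
          mul_le_mul_of_nonneg_left (hu.abs_sublevelRadiusDeriv_sub_le hη hρ
            (norm_eq_of_mem_sphere w) hδ) (by positivity)
      _ = _ := by ring
  calc |deriv (sublevelVol U u) δ - d * sublevelVol U u δ|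
      = ‖∫ w : 𝕊, (sublevelRadius u ρ w δ ^ (d - 1) * sublevelRadiusDeriv u ρ w δ -
          sublevelRadius u ρ w δ ^ d) ∂volume.toSphere‖ := by
        rw [hderiv.deriv, hvol, integral_sub hint' hint, Real.norm_eq_abs]
    _ ≤ ∫ w : 𝕊, 3 * η ^ 2 * sublevelRadius u ρ w δ ^ d ∂volume.toSphere :=
        norm_integral_le_of_norm_le (hint.const_mul _) (ae_of_all _ hpointwise)
    _ = 3 * d * η ^ 2 * sublevelVol U u δ := by rw [integral_const_mul, ← hvol]; ring

end IsFlatOn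

end Sublevel

theorem eventually_abs_deriv_sublevelVol_sub_lt {d m : ℕ} {U : Set (EuclideanSpace ℝ (Fin d))}
    {u : EuclideanSpace ℝ (Fin d) → EuclideanSpace ℝ (Fin m)} (hU : IsOpen U) (h0U : 0 ∈ U)
    (hu : ContDiffOn ℝ 1 u U) (hu0 : u 0 = 0) (hDu0 : fderiv ℝ u 0 = 0) {ε : ℝ} (hε : 0 < ε) :
    ∀ᶠ δ in atBot, 0 < sublevelVol U u δ ∧
      |deriv (sublevelVol U u) δ - d * sublevelVol U u δ| < ε * sublevelVol U u δ := by
  rcases eq_or_ne d 0 with rfl | hd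
  · simp [funext (sublevelVol_eq_one_of_fin_zero h0U hu0), hε]
  have : NeZero d := ⟨hd⟩
  have hsmall : ∀ᶠ η in 𝓝 (0 : ℝ), η ≤ 1 / 2 ∧ 3 * d * η ^ 2 < ε :=
    (eventually_le_nhds (by norm_num)).and
      ((by fun_prop : Continuous fun η : ℝ => 3 * d * η ^ 2).tendsto' 0 0 (by simp)
        |>.eventually (gt_mem_nhds hε))
  obtain ⟨η, ⟨hη, hηε⟩, hη0⟩ := ((hsmall.filter_mono (nhdsWithin_le_nhds (s := Ioi 0))).and
    self_mem_nhdsWithin).exists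
  obtain ⟨ρ, hρ, hball, hflat⟩ := exists_closedBall_subset_isFlatOn hU h0U hu hu0 hDu0 hη0
  filter_upwards [eventually_lt_atBot (log ρ)] with δ hδ
  have hpos := hflat.sublevelVol_pos hball (by linarith) hρ hδ
  exact ⟨hpos, (hflat.abs_deriv_sublevelVol_sub_le hball hη hρ hδ).trans_lt
    (mul_lt_mul_of_pos_right hηε hpos)⟩

/-- **Volume derivative of sublevel sets.** Let `u : U → ℝ^{D-d}` be smooth on an open `U ∋ 0`
with `u(0) = 0` and `Du(0) = 0` (here `m` plays the role of `D - d`), and let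
`A_δ = (∂/∂δ) Vol(V_δ)` be the derivative in `δ` of the volume of the sublevel set
`V_δ = {y ∈ U : ‖y‖² + ‖u(y)‖² < e^{2δ}}`. Then for every `ε > 0` there is `K` such that for
all `δ < K`, `(d - ε) Vol(V_δ) < A_δ < (d + ε) Vol(V_δ)`; in particular
`A_δ / Vol(V_δ) → d` as `δ → -∞`. -/
theorem sublevel_volume_derivative
    {d m : ℕ} (U : Set (EuclideanSpace ℝ (Fin d)))
    (hU : IsOpen U) (h0U : (0 : EuclideanSpace ℝ (Fin d)) ∈ U)
    (u : EuclideanSpace ℝ (Fin d) → EuclideanSpace ℝ (Fin m))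
    (hu : ContDiffOn ℝ (⊤ : ℕ∞) u U) (hu0 : u 0 = 0) (hDu0 : fderiv ℝ u 0 = 0) :
    (∀ ε > (0 : ℝ), ∃ K : ℝ, ∀ δ < K,
      ((d : ℝ) - ε) * sublevelVol U u δ < deriv (sublevelVol U u) δ ∧
      deriv (sublevelVol U u) δ < ((d : ℝ) + ε) * sublevelVol U u δ) ∧
    Tendsto (fun δ : ℝ => deriv (sublevelVol U u) δ / sublevelVol U u δ)
      atBot (𝓝 (d : ℝ)) := by
  have key (ε : ℝ) (hε : 0 < ε) := eventually_abs_deriv_sublevelVol_sub_lt hU h0U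
    (hu.of_le (by exact_mod_cast le_top)) hu0 hDu0 hε
  refine ⟨fun ε hε => ?_, tendsto_div_of_forall_eventually_abs_sub_mul_lt key⟩
  obtain ⟨K, hK⟩ := eventually_atBot.1 (key ε hε)
  refine ⟨K, fun δ hδ => ?_⟩
  obtain ⟨-, hlt⟩ := hK δ hδ.le
  constructor <;> linarith [abs_sub_lt_iff.1 hlt]
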